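/- Let κ > 1, 0 < θ < 1/3, and u ∈ ℝ with |u| ≤ κ^θ. Then | e^{−iu/κ}/(1 − iu/κ) − (1 − u²/(2κ²)) | ≤ C₂ · |u|³/κ³, where C₂ = (1/(1−κ^{θ−1}))·(1/(1−κ^{θ−1}/4) + 5/2). -/

import Mathlib

open Real

/-- The constant `C₂(κ,θ)`. -/
noncomputable def C2 (κ θ : ℝ) : ℝ :=
  (1 / (1 - κ ^ (θ - 1))) * (1 / (1 - κ ^ (θ - 1) / 4) + 5 / 2)

/-!
With `z = iu/κ`, the Taylor remainder of `e^{-z}` after `1 - z + z²/2` is at most `(2/9)‖z‖³`,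
and `(1 + z²/2)(1 - z) = 1 - z + z²/2 - z³/2`, so the error is `(remainder + z³/2)/(1 - z)`,
of size at most `(13/18)‖z‖³/(1 - ‖z‖)`. The hypothesis `|u| ≤ κ^θ` gives `‖z‖ ≤ κ^{θ-1} < 1`,
and `13/18` is far below the second factor of `C₂`.
-/

namespace Complex

theorem norm_exp_neg_sub_quadratic_le {z : ℂ} (hz : ‖z‖ ≤ 1) :
    ‖exp (-z) - (1 - z + z ^ 2 / 2)‖ ≤ 2 / 9 * ‖z‖ ^ 3 := by
  have hsum : ∑ m ∈ Finset.range 3, (-z) ^ m / m.factorial = 1 - z + z ^ 2 / 2 := by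
    simp only [Finset.sum_range_succ, Finset.sum_range_zero, Nat.factorial]
    push_cast
    ring
  have h := exp_bound (x := -z) (by rwa [norm_neg]) (n := 3) (by norm_num)
  rw [hsum, norm_neg] at h
  convert h using 1
  norm_num [Nat.factorial]
  ring

theorem exp_neg_div_one_sub_sub_eq {z : ℂ} (hz : z ≠ 1) :
    exp (-z) / (1 - z) - (1 + z ^ 2 / 2) =
      (exp (-z) - (1 - z + z ^ 2 / 2) + z ^ 3 / 2) / (1 - z) := by
  have : 1 - z ≠ 0 := sub_ne_zero.mpr hz.symm
  field_simp
  ring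

theorem norm_exp_neg_div_one_sub_sub_le {z : ℂ} (hz : ‖z‖ < 1) :
    ‖exp (-z) / (1 - z) - (1 + z ^ 2 / 2)‖ ≤ 13 / 18 * ‖z‖ ^ 3 / (1 - ‖z‖) := by
  have hz1 : z ≠ 1 := by rintro rfl; simp at hz
  have hden : 1 - ‖z‖ ≤ ‖1 - z‖ := by simpa using norm_sub_norm_le (1 : ℂ) z
  have hnum : ‖exp (-z) - (1 - z + z ^ 2 / 2) + z ^ 3 / 2‖ ≤ 13 / 18 * ‖z‖ ^ 3 :=
    calc _ ≤ ‖exp (-z) - (1 - z + z ^ 2 / 2)‖ + ‖z ^ 3 / 2‖ := norm_add_le _ _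
      _ ≤ 2 / 9 * ‖z‖ ^ 3 + ‖z‖ ^ 3 / 2 := by
        gcongr
        · exact norm_exp_neg_sub_quadratic_le hz.le
        · simp
      _ = 13 / 18 * ‖z‖ ^ 3 := by ring
  rw [exp_neg_div_one_sub_sub_eq hz1, norm_div]
  exact div_le_div₀ (by positivity) hnum (by linarith) hden

end Complex

theorem div_one_sub_rpow_le_C2 {κ θ : ℝ} (hκ : 1 < κ) (hθ : θ < 1) :
    13 / 18 / (1 - κ ^ (θ - 1)) ≤ C2 κ θ := by
  have hr0 : 0 ≤ κ ^ (θ - 1) := rpow_nonneg (by linarith) _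
  have hr1 : κ ^ (θ - 1) < 1 := rpow_lt_one_of_one_lt_of_neg hκ (by linarith)
  have h4 : 1 ≤ 1 / (1 - κ ^ (θ - 1) / 4) := by
    rw [le_div_iff₀ (by linarith)]
    linarith
  calc 13 / 18 / (1 - κ ^ (θ - 1)) = 1 / (1 - κ ^ (θ - 1)) * (13 / 18) := by ring
    _ ≤ C2 κ θ := mul_le_mul_of_nonneg_left (by linarith) (one_div_pos.mpr (by linarith)).le

theorem exp_over_one_sub_approx_general (κ θ u : ℝ) (hκ : 1 < κ) (hθ1 : θ < 1 / 3)
    (hu : |u| ≤ κ ^ θ) :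
    ‖Complex.exp (-(Complex.I * u) / κ) / (1 - Complex.I * u / κ) -
        ((1 : ℂ) - (u : ℂ) ^ 2 / (2 * (κ : ℂ) ^ 2))‖ ≤
      C2 κ θ * |u| ^ (3 : ℕ) / κ ^ (3 : ℕ) := by
  have hκ0 : 0 < κ := by linarith
  set z : ℂ := Complex.I * u / κ with hz
  have hnorm : ‖z‖ = |u| / κ := by simp [hz, abs_of_pos hκ0]
  have hzr : ‖z‖ ≤ κ ^ (θ - 1) := by
    rw [hnorm, div_le_iff₀ hκ0, rpow_sub_one hκ0.ne', div_mul_cancel₀ _ hκ0.ne']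
    exact hu
  have hr1 : κ ^ (θ - 1) < 1 := rpow_lt_one_of_one_lt_of_neg hκ (by linarith)
  have hquad : (1 : ℂ) - (u : ℂ) ^ 2 / (2 * (κ : ℂ) ^ 2) = 1 + z ^ 2 / 2 := by
    have : (κ : ℂ) ≠ 0 := by exact_mod_cast hκ0.ne'
    rw [hz, div_pow, mul_pow, Complex.I_sq]
    field_simp
    ring
  rw [neg_div, hquad]
  calc _ ≤ 13 / 18 * ‖z‖ ^ 3 / (1 - ‖z‖) :=
        Complex.norm_exp_neg_div_one_sub_sub_le (hzr.trans_lt hr1)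
    _ ≤ 13 / 18 * ‖z‖ ^ 3 / (1 - κ ^ (θ - 1)) := by gcongr
    _ = 13 / 18 / (1 - κ ^ (θ - 1)) * (|u| ^ 3 / κ ^ 3) := by rw [hnorm, div_pow]; ring
    _ ≤ C2 κ θ * (|u| ^ 3 / κ ^ 3) := by
        gcongr
        exact div_one_sub_rpow_le_C2 hκ (by linarith)
    _ = C2 κ θ * |u| ^ (3 : ℕ) / κ ^ (3 : ℕ) := (mul_div_assoc _ _ _).symm

/-- For `κ > 1`, `0 < θ < 1/3` and real `u` with `|u| ≤ κ^θ`,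
`|e^{−iu/κ}/(1 − iu/κ) − (1 − u²/(2κ²))| ≤ C₂ |u|³/κ³`. -/
theorem exp_over_one_sub_approx (κ θ u : ℝ) (hκ : 1 < κ) (hθ0 : 0 < θ) (hθ1 : θ < 1 / 3)
    (hu : |u| ≤ κ ^ θ) :
    ‖Complex.exp (-(Complex.I * u) / κ) / (1 - Complex.I * u / κ) -
        ((1 : ℂ) - (u : ℂ) ^ 2 / (2 * (κ : ℂ) ^ 2))‖ ≤
      C2 κ θ * |u| ^ (3 : ℕ) / κ ^ (3 : ℕ) :=
  exp_over_one_sub_approx_general κ θ u hκ hθ1 hu
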